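/- arXiv:2602.05753 — 3 statements merged into one kernel-verified Lean document; each statement's English description precedes it below -/
import Mathlib

section
/- If H : ℝ → ℝ satisfies the d'Alembert equation with H(0) = 1, then for all t,u ∈ ℝ, (H(t+u) - H(t-u))² = 4·(H(t)² - 1)·(H(u)² - 1). -/
theorem stmt_4 (H : ℝ → ℝ)
    (hd : ∀ t u : ℝ, H (t + u) + H (t - u) = 2 * H t * H u)
    (h0 : H 0 = 1) :
    ∀ t u : ℝ, (H (t + u) - H (t - u)) ^ 2 = 4 * (H t ^ 2 - 1) * (H u ^ 2 - 1) := by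
  intro t u
  have h1 := hd (t + u) (t - u)
  have h2 := hd t t
  have h3 := hd u u
  simp only [show t + u + (t - u) = t + t by ring, show t + u - (t - u) = u + u by ring,
    show t - t = (0:ℝ) by ring, show u - u = (0:ℝ) by ring, h0] at h1 h2 h3
  linear_combination (H (t + u) + H (t - u) + 2 * H t * H u) * hd t u + 2 * h1 - 2 * h2 - 2 * h3
end

section
/- If H : ℝ → ℝ satisfies the d'Alembert equation with H(0) = 1 and the limit of 2·(H(t) - 1)/t² as t → 0 exists (as a finite real number), then H is continuous on ℝ. -/
open Filter Topology

theorem stmt_5 (H : ℝ → ℝ)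
    (hd : ∀ t u : ℝ, H (t + u) + H (t - u) = 2 * H t * H u)
    (h0 : H 0 = 1)
    (κ : ℝ)
    (hlim : Tendsto (fun t : ℝ => 2 * (H t - 1) / t ^ 2) (𝓝[≠] 0) (𝓝 κ)) :
    Continuous H := by
  -- Step 1: H tends to 1 at 0
  have h1 : Tendsto H (𝓝 0) (𝓝 1) := by
    have hsq : Tendsto (fun t : ℝ => t ^ 2 / 2) (𝓝[≠] (0:ℝ)) (𝓝 0) := by
      have : Tendsto (fun t : ℝ => t ^ 2 / 2) (𝓝 (0:ℝ)) (𝓝 ((0:ℝ)^2/2)) := by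
        exact (continuous_pow 2).div_const 2 |>.tendsto 0
      simpa using this.mono_left nhdsWithin_le_nhds
    have hmul : Tendsto (fun t : ℝ => (2 * (H t - 1) / t ^ 2) * (t ^ 2 / 2))
        (𝓝[≠] (0:ℝ)) (𝓝 (κ * 0)) := hlim.mul hsq
    have heq : Tendsto H (𝓝[≠] (0:ℝ)) (𝓝 1) := by
      have : Tendsto (fun t : ℝ => (2 * (H t - 1) / t ^ 2) * (t ^ 2 / 2) + 1)
          (𝓝[≠] (0:ℝ)) (𝓝 (κ * 0 + 1)) := hmul.add tendsto_const_nhds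
      rw [mul_zero, zero_add] at this
      refine this.congr' ?_
      filter_upwards [self_mem_nhdsWithin] with t ht
      have ht2 : t ^ 2 ≠ 0 := pow_ne_zero 2 ht
      field_simp
      rw [mul_div_cancel_right₀ _ (show t ≠ 0 from ht)]
      ring
    have : 𝓝 (0:ℝ) = 𝓝[≠] (0:ℝ) ⊔ pure 0 := (nhdsNE_sup_pure 0).symm
    rw [this]
    refine Tendsto.sup heq ?_
    simpa [h0] using tendsto_pure_nhds H 0 |>.congr (fun _ => rfl) |>.mono_right (le_of_eq (by rw [h0]))
  -- Step 2: continuity at each point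
  rw [continuous_iff_continuousAt]
  intro x
  have hHu : Tendsto (fun u : ℝ => H u) (𝓝 0) (𝓝 1) := h1
  -- sum
  have hS : Tendsto (fun u : ℝ => H (x + u) + H (x - u)) (𝓝 0) (𝓝 (2 * H x)) := by
    have : Tendsto (fun u : ℝ => 2 * H x * H u) (𝓝 0) (𝓝 (2 * H x * 1)) :=
      tendsto_const_nhds.mul hHu
    rw [mul_one] at this
    exact this.congr (fun u => (hd x u).symm)
  -- product
  have hprod : ∀ u : ℝ, H (x + u) * H (x - u) = H x ^ 2 + H u ^ 2 - 1 := by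
    intro u
    have e1 := hd (x + u) (x - u)
    have e2 := hd x x
    have e3 := hd u u
    have hx0 : x + u + (x - u) = x + x := by ring
    have hx1 : x + u - (x - u) = u + u := by ring
    rw [hx0, hx1] at e1
    have hsub2 : x - x = 0 := by ring
    have hsub3 : u - u = 0 := by ring
    rw [hsub2] at e2
    rw [hsub3] at e3
    simp only [h0] at e2 e3
    nlinarith [e1, e2, e3]
  have hP : Tendsto (fun u : ℝ => H (x + u) * H (x - u)) (𝓝 0) (𝓝 (H x ^ 2)) := by
    have : Tendsto (fun u : ℝ => H x ^ 2 + H u ^ 2 - 1) (𝓝 0) (𝓝 (H x ^ 2 + 1 ^ 2 - 1)) :=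
      (tendsto_const_nhds.add (hHu.pow 2)).sub tendsto_const_nhds
    simp only [one_pow, add_sub_cancel_right] at this
    exact this.congr (fun u => (hprod u).symm)
  -- (A - B)^2 → 0
  have hD2 : Tendsto (fun u : ℝ => (H (x + u) - H (x - u)) ^ 2) (𝓝 0) (𝓝 0) := by
    have : Tendsto (fun u : ℝ => (H (x + u) + H (x - u)) ^ 2 - 4 * (H (x + u) * H (x - u)))
        (𝓝 0) (𝓝 ((2 * H x) ^ 2 - 4 * H x ^ 2)) := (hS.pow 2).sub (tendsto_const_nhds.mul hP)
    have h02 : (2 * H x) ^ 2 - 4 * H x ^ 2 = 0 := by ring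
    rw [h02] at this
    exact this.congr (fun u => by ring)
  have hD : Tendsto (fun u : ℝ => H (x + u) - H (x - u)) (𝓝 0) (𝓝 0) := by
    rw [tendsto_zero_iff_abs_tendsto_zero]
    have := hD2.sqrt
    rw [Real.sqrt_zero] at this
    exact this.congr (fun u => Real.sqrt_sq_eq_abs _)
  -- conclude A → H x
  have hA : Tendsto (fun u : ℝ => H (x + u)) (𝓝 0) (𝓝 (H x)) := by
    have : Tendsto (fun u : ℝ => ((H (x + u) + H (x - u)) + (H (x + u) - H (x - u))) / 2)
        (𝓝 0) (𝓝 ((2 * H x + 0) / 2)) := ((hS.add hD).div_const 2)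
    have h2 : (2 * H x + 0) / 2 = H x := by ring
    rw [h2] at this
    exact this.congr (fun u => by ring)
  -- change of variables
  have key : Tendsto H (𝓝 x) (𝓝 (H x)) := by
    have hsub : Tendsto (fun y : ℝ => y - x) (𝓝 x) (𝓝 0) := by
      have : Tendsto (fun y : ℝ => y - x) (𝓝 x) (𝓝 (x - x)) :=
        (continuous_id.sub continuous_const).tendsto x
      simpa using this
    have := hA.comp hsub
    refine this.congr (fun y => ?_)
    simp [Function.comp]
  exact key
end

section
/- If H : ℝ → ℝ satisfies the d'Alembert equation, H(0) = 1, and the limit κ of 2·(H(t)-1)/t² as t → 0 exists with κ = 1, then H(t) = cosh(t) for all t ∈ ℝ. -/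
open Filter Topology

-- Taylor bound for cosh
lemma cosh_taylor (x : ℝ) (hx : |x| ≤ 1) : |2 * Real.cosh x - 2 - x ^ 2| ≤ |x| ^ 3 := by
  have h1 := Real.exp_bound hx (n := 3) (by norm_num)
  have h2 := Real.exp_bound (x := -x) (by simpa) (n := 3) (by norm_num)
  have e1 : (∑ m ∈ Finset.range 3, x ^ m / m.factorial) = 1 + x + x ^ 2 / 2 := by
    simp [Finset.sum_range_succ]; try ring
  have e2 : (∑ m ∈ Finset.range 3, (-x) ^ m / m.factorial) = 1 - x + x ^ 2 / 2 := by
    simp [Finset.sum_range_succ]; try ring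
  rw [e1] at h1; rw [e2] at h2
  have hc : Real.cosh x = (Real.exp x + Real.exp (-x)) / 2 := Real.cosh_eq x
  have habs : |(-x)| = |x| := abs_neg x
  rw [habs] at h2
  have key : 2 * Real.cosh x - 2 - x ^ 2
      = (Real.exp x - (1 + x + x ^ 2 / 2)) + (Real.exp (-x) - (1 - x + x ^ 2 / 2)) := by
    rw [hc]; ring
  rw [key]
  calc |(Real.exp x - (1 + x + x ^ 2 / 2)) + (Real.exp (-x) - (1 - x + x ^ 2 / 2))|
      ≤ |Real.exp x - (1 + x + x ^ 2 / 2)| + |Real.exp (-x) - (1 - x + x ^ 2 / 2)| := abs_add_le _ _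
    _ ≤ |x| ^ 3 * (4 / (6 * 3)) + |x| ^ 3 * (4 / (6 * 3)) :=
        add_le_add (h1.trans (by norm_num [Nat.factorial])) (h2.trans (by norm_num [Nat.factorial]))
    _ ≤ |x| ^ 3 := by nlinarith [pow_nonneg (abs_nonneg x) 3]

lemma cosh_le_one_add_sq (x : ℝ) (hx : |x| ≤ 1) : Real.cosh x ≤ 1 + x ^ 2 := by
  have h := cosh_taylor x hx
  have h3 : |x| ^ 3 ≤ x ^ 2 := by
    calc |x| ^ 3 = |x| * |x| ^ 2 := by ring
      _ ≤ 1 * |x| ^ 2 := by gcongr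
      _ = x ^ 2 := by rw [one_mul, sq_abs]
  have := (abs_le.1 h).2
  nlinarith

lemma cosh_lim : Tendsto (fun t : ℝ => 2 * (Real.cosh t - 1) / t ^ 2) (𝓝[≠] 0) (𝓝 1) := by
  have key : ∀ t : ℝ, t ∈ Set.Ioo (-1:ℝ) 1 \ {0} →
      |2 * (Real.cosh t - 1) / t ^ 2 - 1| ≤ |t| := by
    intro t ht
    obtain ⟨⟨h1, h2⟩, h0⟩ := ht
    have ht0 : t ≠ 0 := h0
    have habs : |t| ≤ 1 := abs_le.2 ⟨h1.le, h2.le⟩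
    have h := cosh_taylor t habs
    have ht2 : (0:ℝ) < t ^ 2 := by positivity
    have : 2 * (Real.cosh t - 1) / t ^ 2 - 1 = (2 * Real.cosh t - 2 - t ^ 2) / t ^ 2 := by
      field_simp
    rw [this, abs_div, abs_of_pos ht2, div_le_iff₀ ht2]
    calc |2 * Real.cosh t - 2 - t ^ 2| ≤ |t| ^ 3 := h
      _ = |t| * t ^ 2 := by rw [← sq_abs]; ring
  have habs : Tendsto (fun t : ℝ => |t|) (𝓝[≠] (0:ℝ)) (𝓝 0) := by
    have : Tendsto (fun t : ℝ => |t|) (𝓝 (0:ℝ)) (𝓝 0) := by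
      simpa using continuous_abs.tendsto (0:ℝ)
    exact this.mono_left nhdsWithin_le_nhds
  rw [show (1:ℝ) = 0 + 1 by ring, ← tendsto_sub_nhds_zero_iff]
  apply squeeze_zero_norm' _ (by simpa using habs)
  have hmem : Set.Ioo (-1:ℝ) 1 \ {0} ∈ 𝓝[≠] (0:ℝ) :=
    diff_mem_nhdsWithin_compl (Ioo_mem_nhds (by norm_num) (by norm_num)) _
  filter_upwards [hmem] with t ht
  simpa using key t ht

theorem stmt_11 (H : ℝ → ℝ)
    (hd : ∀ t u : ℝ, H (t + u) + H (t - u) = 2 * H t * H u)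
    (h0 : H 0 = 1)
    (hlim : Tendsto (fun t : ℝ => 2 * (H t - 1) / t ^ 2) (𝓝[≠] 0) (𝓝 1)) :
    ∀ t : ℝ, H t = Real.cosh t := by
  -- duplication for H
  have hdup : ∀ s : ℝ, H s = 2 * H (s / 2) ^ 2 - 1 := by
    intro s
    have := hd (s / 2) (s / 2)
    rw [show s / 2 + s / 2 = s by ring, show s / 2 - s / 2 = 0 by ring, h0] at this
    nlinarith [this]
  -- duplication for cosh
  have cdup : ∀ s : ℝ, Real.cosh s = 2 * Real.cosh (s / 2) ^ 2 - 1 := by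
    intro s
    have h1 := Real.cosh_two_mul (s / 2)
    have h2 := Real.cosh_sq_sub_sinh_sq (s / 2)
    rw [show 2 * (s / 2) = s by ring] at h1
    nlinarith
  set D : ℝ → ℝ := fun s => H s - Real.cosh s with hD
  have Ddup : ∀ s : ℝ, D s = 2 * (H (s / 2) + Real.cosh (s / 2)) * D (s / 2) := by
    intro s
    simp only [hD]
    rw [hdup s, cdup s]; ring
  -- fixed neighborhood bound on |H u - 1|
  obtain ⟨δ₁, hδ₁pos, hδ₁⟩ : ∃ δ > 0, ∀ u : ℝ, u ≠ 0 → |u| < δ → |2 * (H u - 1) / u ^ 2 - 1| < 1 := by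
    have := Metric.tendsto_nhdsWithin_nhds.1 hlim 1 one_pos
    obtain ⟨δ, hδpos, hδ⟩ := this
    exact ⟨δ, hδpos, fun u hu hud => by
      have := hδ (x := u) hu (by simpa [Real.dist_eq] using hud)
      simpa [Real.dist_eq] using this⟩
  set δ₀ : ℝ := min (δ₁ / 2) 1 with hδ₀
  have hδ₀pos : 0 < δ₀ := lt_min (by linarith) one_pos
  have hδ₀le1 : δ₀ ≤ 1 := min_le_right _ _
  have hHbound : ∀ u : ℝ, |u| ≤ δ₀ → |H u - 1| ≤ u ^ 2 := by
    intro u hu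
    rcases eq_or_ne u 0 with rfl | hu0
    · simp [h0]
    · have hud : |u| < δ₁ := lt_of_le_of_lt hu (lt_of_le_of_lt (min_le_left _ _) (by linarith))
      have h := hδ₁ u hu0 hud
      have hu2 : (0:ℝ) < u ^ 2 := by positivity
      have h2 := (abs_lt.1 h).2
      have h3 := (abs_lt.1 h).1
      have h2' : 2 * (H u - 1) / u ^ 2 < 2 := by linarith
      have h3' : 0 < 2 * (H u - 1) / u ^ 2 := by linarith
      rw [div_lt_iff₀ hu2] at h2'
      have h3'' : 0 < 2 * (H u - 1) := by
        have := mul_pos h3' hu2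
        rwa [div_mul_cancel₀ _ (ne_of_gt hu2)] at this
      rw [abs_le]
      constructor <;> nlinarith
  have hcbound : ∀ u : ℝ, |u| ≤ δ₀ → Real.cosh u ≤ 1 + u ^ 2 := fun u hu =>
    cosh_le_one_add_sq u (le_trans hu hδ₀le1)
  -- amplification
  have amp : ∀ n : ℕ, ∀ s : ℝ, |s| ≤ δ₀ →
      |D s| ≤ 4 ^ n * Real.exp (s ^ 2) * |D (s / 2 ^ n)| := by
    intro n
    induction n with
    | zero =>
      intro s hs
      simp only [pow_zero, one_mul, div_one]
      nlinarith [Real.one_le_exp (sq_nonneg s), abs_nonneg (D s)]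
    | succ n ih =>
      intro s hs
      have hs2 : |s / 2| ≤ δ₀ := by
        rw [abs_div]
        have : |s| / |(2:ℝ)| ≤ |s| := by
          rw [abs_two]; linarith [abs_nonneg s]
        linarith
      have hfac : |2 * (H (s / 2) + Real.cosh (s / 2))| ≤ 4 + s ^ 2 := by
        have h1 := hHbound (s / 2) hs2
        have h2 := hcbound (s / 2) hs2
        have h3 : |H (s / 2)| ≤ 1 + (s / 2) ^ 2 := by
          have := abs_abs_sub_abs_le_abs_sub (H (s/2)) 1
          have h1' := (abs_le.1 h1)
          rw [abs_le]; constructor <;> nlinarith [h1'.1, h1'.2]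
        have h4 : Real.cosh (s / 2) ≤ 1 + (s / 2) ^ 2 := h2
        have h5 : 0 < Real.cosh (s / 2) := Real.cosh_pos (s / 2)
        have h3' := abs_le.1 h3
        rw [abs_le]
        constructor <;> nlinarith [h3'.1, h3'.2]
      have step : |D s| ≤ (4 + s ^ 2) * |D (s / 2)| := by
        rw [Ddup s, abs_mul]
        exact mul_le_mul_of_nonneg_right hfac (abs_nonneg _)
      have ihs := ih (s / 2) hs2
      have hrec : (s / 2) / 2 ^ n = s / 2 ^ (n + 1) := by
        rw [pow_succ]; ring
      rw [hrec] at ihs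
      have hsq : (s / 2) ^ 2 = s ^ 2 / 4 := by ring
      rw [hsq] at ihs
      calc |D s| ≤ (4 + s ^ 2) * |D (s / 2)| := step
        _ ≤ (4 + s ^ 2) * (4 ^ n * Real.exp (s ^ 2 / 4) * |D (s / 2 ^ (n + 1))|) := by
            apply mul_le_mul_of_nonneg_left ihs; nlinarith [sq_nonneg s]
        _ ≤ 4 ^ (n + 1) * Real.exp (s ^ 2) * |D (s / 2 ^ (n + 1))| := by
            have key : (4 + s ^ 2) * Real.exp (s ^ 2 / 4) ≤ 4 * Real.exp (s ^ 2) := by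
              have h1 : 1 + 3 * (s ^ 2 / 4) ≤ Real.exp (3 * (s ^ 2 / 4)) := by
                nlinarith [Real.add_one_le_exp (3 * (s ^ 2 / 4))]
              have h2 : Real.exp (3 * (s ^ 2 / 4)) * Real.exp (s ^ 2 / 4) = Real.exp (s ^ 2) := by
                rw [← Real.exp_add]; ring_nf
              have h3 : (0:ℝ) < Real.exp (s ^ 2 / 4) := Real.exp_pos _
              nlinarith [Real.exp_pos (3 * (s ^ 2 / 4))]
            calc (4 + s ^ 2) * (4 ^ n * Real.exp (s ^ 2 / 4) * |D (s / 2 ^ (n + 1))|)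
                = ((4 + s ^ 2) * Real.exp (s ^ 2 / 4)) * (4 ^ n * |D (s / 2 ^ (n + 1))|) := by ring
              _ ≤ (4 * Real.exp (s ^ 2)) * (4 ^ n * |D (s / 2 ^ (n + 1))|) := by
                  apply mul_le_mul_of_nonneg_right key
                  positivity
              _ = 4 ^ (n + 1) * Real.exp (s ^ 2) * |D (s / 2 ^ (n + 1))| := by ring
  -- difference tendsto 0
  have hdiff : Tendsto (fun t : ℝ => 2 * D t / t ^ 2) (𝓝[≠] 0) (𝓝 0) := by
    have := hlim.sub cosh_lim
    rw [sub_self] at this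
    apply this.congr
    intro t
    simp only [hD]
    rw [← sub_div]; ring_nf
  -- D = 0 on |s| ≤ δ₀
  have Dzero : ∀ s : ℝ, |s| ≤ δ₀ → D s = 0 := by
    intro s hs
    rcases eq_or_ne s 0 with rfl | hs0
    · simp [hD, h0, Real.cosh_zero]
    have hC : (0:ℝ) < s ^ 2 * Real.exp (s ^ 2) := by positivity
    have key : ∀ ε > (0:ℝ), |D s| ≤ ε * (s ^ 2 * Real.exp (s ^ 2)) := by
      intro ε hε
      obtain ⟨δ₂, hδ₂pos, hδ₂⟩ : ∃ δ > 0, ∀ u : ℝ, u ≠ 0 → |u| < δ → |2 * D u / u ^ 2| < ε := by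
        have := Metric.tendsto_nhdsWithin_nhds.1 hdiff ε hε
        obtain ⟨δ, hδpos, hδ⟩ := this
        exact ⟨δ, hδpos, fun u hu hud => by
          have h' := hδ (x := u) hu (by simpa [Real.dist_eq] using hud)
          rwa [Real.dist_eq, sub_zero] at h'⟩
      obtain ⟨n, hn⟩ : ∃ n : ℕ, |s| / δ₂ < 2 ^ n :=
        pow_unbounded_of_one_lt (|s| / δ₂) one_lt_two
      have h2n : (0:ℝ) < 2 ^ n := by positivity
      have hsn : |s / 2 ^ n| < δ₂ := by
        rw [abs_div, abs_of_pos h2n, div_lt_iff₀ h2n]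
        rw [div_lt_iff₀ hδ₂pos] at hn
        linarith
      have hsn0 : s / 2 ^ n ≠ 0 := by
        apply div_ne_zero hs0 (ne_of_gt h2n)
      have hb := hδ₂ (s / 2 ^ n) hsn0 hsn
      have hu2 : (0:ℝ) < (s / 2 ^ n) ^ 2 := by positivity
      have hDb : |D (s / 2 ^ n)| ≤ ε * (s / 2 ^ n) ^ 2 / 2 := by
        rw [abs_div, abs_of_pos hu2, div_lt_iff₀ hu2] at hb
        rw [abs_mul, abs_two] at hb
        linarith
      have := amp n s hs
      have h4n : (s / 2 ^ n) ^ 2 = s ^ 2 / 4 ^ n := by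
        have h24 : ((2:ℝ) ^ n) ^ 2 = 4 ^ n := by
          rw [← pow_mul, mul_comm, pow_mul]; norm_num
        rw [div_pow, h24]
      calc |D s| ≤ 4 ^ n * Real.exp (s ^ 2) * |D (s / 2 ^ n)| := this
        _ ≤ 4 ^ n * Real.exp (s ^ 2) * (ε * (s ^ 2 / 4 ^ n) / 2) := by
            apply mul_le_mul_of_nonneg_left _ (by positivity)
            rw [← h4n]; exact hDb
        _ = ε * (s ^ 2 * Real.exp (s ^ 2)) / 2 := by
            field_simp
        _ ≤ ε * (s ^ 2 * Real.exp (s ^ 2)) := by nlinarith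
    by_contra hne
    have habs : 0 < |D s| := abs_pos.2 hne
    have := key (|D s| / (2 * (s ^ 2 * Real.exp (s ^ 2)))) (by positivity)
    rw [div_mul_eq_mul_div, mul_comm] at this
    have h2 : (s ^ 2 * Real.exp (s ^ 2)) * |D s| / (2 * (s ^ 2 * Real.exp (s ^ 2))) = |D s| / 2 := by
      field_simp
    rw [h2] at this
    linarith
  -- extend to all of ℝ
  have ext : ∀ n : ℕ, ∀ t : ℝ, |t| ≤ δ₀ * 2 ^ n → D t = 0 := by
    intro n
    induction n with
    | zero => intro t ht; exact Dzero t (by simpa using ht)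
    | succ n ih =>
      intro t ht
      have ht2 : |t / 2| ≤ δ₀ * 2 ^ n := by
        rw [abs_div, abs_two, div_le_iff₀ (by norm_num : (0:ℝ) < 2)]
        calc |t| ≤ δ₀ * 2 ^ (n + 1) := ht
          _ = δ₀ * 2 ^ n * 2 := by ring
      have := ih (t / 2) ht2
      rw [Ddup t, this, mul_zero]
  intro t
  obtain ⟨n, hn⟩ : ∃ n : ℕ, |t| / δ₀ < 2 ^ n := pow_unbounded_of_one_lt (|t| / δ₀) one_lt_two
  have : |t| ≤ δ₀ * 2 ^ n := by
    rw [div_lt_iff₀ hδ₀pos] at hn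
    nlinarith
  have := ext n t this
  simpa [hD, sub_eq_zero] using this
end
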